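/- Suppose σ(s_{q,x}) = E[y|q,x] for all items (the pointwise optimum) and also σ(s_{q,x1} - s_{q,x2}) = E[y1|q,x1]·(1 - E[y2|q,x2]) for all pairs with independent labels (the pairwise optimum), where each E[y|q,x] ∈ (0,1). Then for any pair, e^{-s_{q,x1}} + e^{s_{q,x2}} = 0, a contradiction; hence no scoring function simultaneously attains both optima. -/

import Mathlib

noncomputable def sigmoid (t : ℝ) : ℝ := 1 / (1 + Real.exp (-t))

/-!
Both `σ(u - v)` and `σ(u) (1 - σ(v)) = 1 / ((1 + e^{-u}) (1 + e^{v}))` are reciprocals, and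
expanding the second denominator gives that of the first, `1 + e^{v - u}`, plus `e^{-u} + e^{v}`.
So the pairwise optimum forces `e^{-u} + e^{v} = 0`, which is impossible.
-/

theorem sigmoid_sub (u v : ℝ) : sigmoid (u - v) = 1 / (1 + Real.exp (v - u)) := by
  rw [sigmoid, neg_sub]

theorem one_sub_sigmoid (t : ℝ) : 1 - sigmoid t = 1 / (1 + Real.exp t) := by
  have h : Real.exp (-t) * Real.exp t = 1 := by rw [← Real.exp_add, neg_add_cancel, Real.exp_zero]
  rw [sigmoid]
  field_simp
  linear_combination h

theorem sigmoid_mul_one_sub_sigmoid (u v : ℝ) :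
    sigmoid u * (1 - sigmoid v) = 1 / (1 + Real.exp (v - u) + (Real.exp (-u) + Real.exp v)) := by
  rw [sigmoid, one_sub_sigmoid, div_mul_div_comm, one_mul, sub_eq_add_neg, Real.exp_add]
  ring

theorem exp_neg_add_exp_eq_zero_of_sigmoid_sub_eq_mul {u v : ℝ}
    (h : sigmoid (u - v) = sigmoid u * (1 - sigmoid v)) : Real.exp (-u) + Real.exp v = 0 := by
  rw [sigmoid_sub, sigmoid_mul_one_sub_sigmoid, one_div, one_div, inv_inj] at h
  linarith

theorem pointwise_pairwise_optima_incompatible_general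
    {Q X : Type*} [Nonempty Q] [Nonempty X]
    (s : Q → X → ℝ) (E : Q → X → ℝ)
    (hpoint : ∀ q x, sigmoid (s q x) = E q x)
    (hpair : ∀ q x1 x2, sigmoid (s q x1 - s q x2) = E q x1 * (1 - E q x2)) :
    (∀ q x1 x2, Real.exp (-(s q x1)) + Real.exp (s q x2) = 0) ∧ False := by
  have hsum : ∀ q x1 x2, Real.exp (-(s q x1)) + Real.exp (s q x2) = 0 := fun q x1 x2 =>
    exp_neg_add_exp_eq_zero_of_sigmoid_sub_eq_mul (by rw [hpair, hpoint, hpoint])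
  refine ⟨hsum, ?_⟩
  obtain ⟨q⟩ := ‹Nonempty Q›
  obtain ⟨x⟩ := ‹Nonempty X›
  exact (add_pos (Real.exp_pos _) (Real.exp_pos _)).ne' (hsum q x x)

theorem pointwise_pairwise_optima_incompatible
    {Q X : Type*} [Nonempty Q] [Nonempty X]
    (s : Q → X → ℝ) (E : Q → X → ℝ)
    (hE : ∀ q x, E q x ∈ Set.Ioo (0:ℝ) 1)
    (hpoint : ∀ q x, sigmoid (s q x) = E q x)
    (hpair : ∀ q x1 x2, sigmoid (s q x1 - s q x2) = E q x1 * (1 - E q x2)) :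
    (∀ q x1 x2, Real.exp (-(s q x1)) + Real.exp (s q x2) = 0) ∧ False :=
  pointwise_pairwise_optima_incompatible_general s E hpoint hpair
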